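/- arXiv:2510.20200 — 3 statements merged into one kernel-verified Lean document; each statement's English description precedes it below -/
import Mathlib

section
/- Let p̂ and p̂' be i.i.d. real random variables with values in [0,1], both with mean p and variance at most ρ². Let r be uniform on [0,1], independent of p̂ and p̂'. Then the probability that r lies strictly between p̂ and p̂' is at most ρ. -/
/-!
Given `p̂, p̂' ∈ [0,1]`, a uniform threshold on `[0,1]` falls strictly between them with
probability `|p̂ - p̂'|`, so the probability in question is `E|p̂ - p̂'|`. By Jensen this is at most
`√E[(p̂ - p̂')²]`, and for independent copies `E[(p̂ - p̂')²] = 2 Var p̂ ≤ ρ²`.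
-/

open MeasureTheory ProbabilityTheory Set

lemma sq_integral_le_integral_sq {Ω : Type*} {mΩ : MeasurableSpace Ω} {μ : Measure Ω}
    [IsProbabilityMeasure μ] {f : Ω → ℝ} (hf : MemLp f 2 μ) :
    (∫ ω, f ω ∂μ) ^ 2 ≤ ∫ ω, f ω ^ 2 ∂μ := by
  simpa [variance_eq_sub hf] using variance_nonneg f μ

lemma integral_sub_sq_prod {Ω Ω' : Type*} {mΩ : MeasurableSpace Ω} {mΩ' : MeasurableSpace Ω'}
    {μ : Measure Ω} {ν : Measure Ω'} [IsProbabilityMeasure μ] [IsProbabilityMeasure ν]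
    {X : Ω → ℝ} {Y : Ω' → ℝ} (hX : MemLp X 2 μ) (hY : MemLp Y 2 ν) :
    ∫ p, (X p.1 - Y p.2) ^ 2 ∂(μ.prod ν) = Var[X; μ] + Var[Y; ν] + (μ[X] - ν[Y]) ^ 2 := by
  have hZ : MemLp (fun p : Ω × Ω' ↦ X p.1 - Y p.2) 2 (μ.prod ν) :=
    (hX.comp_fst ν).sub (hY.comp_snd μ)
  have hvar : Var[fun p : Ω × Ω' ↦ X p.1 - Y p.2; μ.prod ν] = Var[X; μ] + Var[Y; ν] := by
    simpa [sub_eq_add_neg, variance_neg] using variance_add_prod hX hY.neg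
  have hmean : ∫ p, (X p.1 - Y p.2) ∂(μ.prod ν) = μ[X] - ν[Y] := by
    rw [integral_sub ((hX.integrable one_le_two).comp_fst ν)
      ((hY.integrable one_le_two).comp_snd μ), integral_fun_fst, integral_fun_snd]
    simp
  rw [← hvar, ← hmean, variance_eq_sub hZ]
  simp

lemma volume_restrict_Icc_Ioo_min_max {a b x y : ℝ} (hx : x ∈ Icc a b) (hy : y ∈ Icc a b) :
    volume.restrict (Icc a b) (Ioo (min x y) (max x y)) = ENNReal.ofReal |x - y| := by
  have hsub : Ioo (min x y) (max x y) ⊆ Icc a b := fun t ht ↦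
    ⟨(le_min hx.1 hy.1).trans ht.1.le, ht.2.le.trans (max_le hx.2 hy.2)⟩
  rw [Measure.restrict_apply measurableSet_Ioo, inter_eq_self_of_subset_left hsub,
    Real.volume_Ioo, max_sub_min_eq_abs', abs_sub_comm]

lemma measurableSet_setOf_mem_Ioo_min_max :
    MeasurableSet {z : ℝ × ℝ × ℝ | z.2.2 ∈ Ioo (min z.1 z.2.1) (max z.1 z.2.1)} :=
  (measurableSet_lt (f := fun z : ℝ × ℝ × ℝ ↦ min z.1 z.2.1) (by fun_prop) (by fun_prop)).inter
    (measurableSet_lt (g := fun z : ℝ × ℝ × ℝ ↦ max z.1 z.2.1) (by fun_prop) (by fun_prop))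

lemma prod_prod_setOf_mem_Ioo_min_max {μ ν : Measure ℝ} [SFinite ν] {a b : ℝ}
    (hμ : ∀ᵐ x ∂μ, x ∈ Icc a b) (hν : ∀ᵐ y ∂ν, y ∈ Icc a b) :
    μ.prod (ν.prod (volume.restrict (Icc a b)))
        {z : ℝ × ℝ × ℝ | z.2.2 ∈ Ioo (min z.1 z.2.1) (max z.1 z.2.1)}
      = ∫⁻ p, ENNReal.ofReal |p.1 - p.2| ∂(μ.prod ν) := by
  rw [Measure.prod_apply measurableSet_setOf_mem_Ioo_min_max, lintegral_prod _ (by fun_prop)]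
  refine lintegral_congr_ae ?_
  filter_upwards [hμ] with x hx
  rw [Measure.prod_apply (measurable_prodMk_left measurableSet_setOf_mem_Ioo_min_max)]
  refine lintegral_congr_ae ?_
  filter_upwards [hν] with y hy
  exact volume_restrict_Icc_Ioo_min_max hx hy

/-- Random-threshold replicability: if `p̂, p̂'` are i.i.d. with values in `[0,1]` and
variance at most `ρ²/2`, and `r` is uniform on `[0,1]` independent of both, then the
probability that `r` lies strictly between `p̂` and `p̂'` is at most `ρ`. -/
theorem random_threshold_replicable
    (μ : Measure ℝ) [IsProbabilityMeasure μ] (ρ : ℝ) (hρ : 0 ≤ ρ)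
    (hsupp : ∀ᵐ x ∂μ, x ∈ Set.Icc (0:ℝ) 1)
    (hvar : (∫ x, x^2 ∂μ) - (∫ x, x ∂μ)^2 ≤ ρ^2 / 2) :
    (μ.prod (μ.prod (volume.restrict (Set.Icc (0:ℝ) 1))))
      {z : ℝ × ℝ × ℝ | z.2.2 ∈ Set.Ioo (min z.1 z.2.1) (max z.1 z.2.1)}
      ≤ ENNReal.ofReal ρ := by
  have hmem : MemLp id 2 μ := by
    refine MemLp.of_bound aestronglyMeasurable_id 1 ?_
    filter_upwards [hsupp] with x hx
    rw [id, Real.norm_eq_abs, abs_le]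
    exact ⟨by linarith [hx.1], hx.2⟩
  have hdiff : MemLp (fun p : ℝ × ℝ ↦ p.1 - p.2) 2 (μ.prod μ) :=
    (hmem.comp_fst μ).sub (hmem.comp_snd μ)
  have hvar' : Var[id; μ] ≤ ρ ^ 2 / 2 := by
    simpa [variance_eq_sub hmem] using hvar
  have hsq : ∫ p, |p.1 - p.2| ^ 2 ∂(μ.prod μ) ≤ ρ ^ 2 :=
    calc ∫ p, |p.1 - p.2| ^ 2 ∂(μ.prod μ) = ∫ p, (id p.1 - id p.2) ^ 2 ∂(μ.prod μ) := by
          simp only [sq_abs, id]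
      _ = 2 * Var[id; μ] := by rw [integral_sub_sq_prod hmem hmem]; ring
      _ ≤ ρ ^ 2 := by linarith
  rw [prod_prod_setOf_mem_Ioo_min_max hsupp hsupp,
    ← ofReal_integral_eq_lintegral_ofReal (hdiff.integrable one_le_two).abs
      (.of_forall fun _ ↦ abs_nonneg _)]
  refine ENNReal.ofReal_le_ofReal <|
    (pow_le_pow_iff_left₀ (integral_nonneg fun _ ↦ abs_nonneg _) hρ two_ne_zero).mp ?_
  exact (sq_integral_le_integral_sq hdiff.abs).trans hsq
end

section
/- There do not exist four closed sets B_{(−1,−1)}, B_{(−1,1)}, B_{(1,−1)}, B_{(1,1)} covering the square [−1,1]² such that: (i) the left edge {−1}×[−1,1] is contained in B_{(−1,−1)} ∪ B_{(−1,1)}, the right edge in B_{(1,−1)} ∪ B_{(1,1)}, the bottom edge in B_{(−1,−1)} ∪ B_{(1,−1)}, and the top edge in B_{(−1,1)} ∪ B_{(1,1)}; and (ii) both pairs of 'opposite' sets are disjoint: B_{(−1,−1)} ∩ B_{(1,1)} = ∅ and B_{(−1,1)} ∩ B_{(1,−1)} = ∅. -/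
/-- Signed step around the 4-cycle `ZMod 4`. -/
def ddeg (a b : ZMod 4) : ℤ :=
  if b - a = 0 then 0 else if b - a = 1 then 1 else if b - a = 3 then -1 else 707

lemma ddeg_facts : ∀ c : ZMod 4,
    ddeg c c = 0 ∧ ddeg c (c + 1) = 1 ∧ ddeg (c + 1) c = -1 ∧ c + 1 ≠ c := by decide

lemma ddeg_self : ∀ c : ZMod 4, ddeg c c = 0 := by decide

lemma cell_zero : ∀ a b c e : ZMod 4,
    (b ≠ a + 2 ∧ c ≠ a + 2 ∧ e ≠ a + 2 ∧ c ≠ b + 2 ∧ e ≠ b + 2 ∧ e ≠ c + 2) →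
    (ddeg a b - ddeg e c) + (ddeg b c - ddeg a e) = 0 := by decide

lemma side_sum (c : ZMod 4) (g : ℕ → ZMod 4) :
    ∀ n : ℕ, (∀ i ≤ n, g i = c ∨ g i = c + 1) →
      ∑ i ∈ Finset.range n, ddeg (g i) (g (i + 1))
        = (if g n = c then 0 else 1) - (if g 0 = c then (0:ℤ) else 1) := by
  intro n
  induction n with
  | zero => simp
  | succ m ih =>
    intro h
    rw [Finset.sum_range_succ, ih (fun i hi => h i (hi.trans (Nat.le_succ m)))]
    obtain ⟨f1, f2, f3, f4⟩ := ddeg_facts c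
    rcases h m (Nat.le_succ m) with h1 | h1 <;>
      rcases h (m + 1) le_rfl with h2 | h2 <;>
        rw [h1, h2] <;>
          simp only [f1, f2, f3, ddeg_self, if_pos rfl, if_neg f4, eq_self_iff_true, if_true] <;> ring

lemma grid_false (n : ℕ) (ℓ : ℕ → ℕ → ZMod 4)
    (hcell : ∀ i j, i < n → j < n →
      ℓ (i+1) j ≠ ℓ i j + 2 ∧ ℓ (i+1) (j+1) ≠ ℓ i j + 2 ∧ ℓ i (j+1) ≠ ℓ i j + 2 ∧
      ℓ (i+1) (j+1) ≠ ℓ (i+1) j + 2 ∧ ℓ i (j+1) ≠ ℓ (i+1) j + 2 ∧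
      ℓ i (j+1) ≠ ℓ (i+1) (j+1) + 2)
    (hbot : ∀ i ≤ n, ℓ i 0 = 0 ∨ ℓ i 0 = 1)
    (hrt : ∀ j ≤ n, ℓ n j = 1 ∨ ℓ n j = 2)
    (htop : ∀ i ≤ n, ℓ i n = 2 ∨ ℓ i n = 3)
    (hlf : ∀ j ≤ n, ℓ 0 j = 3 ∨ ℓ 0 j = 0)
    (h00 : ℓ 0 0 = 0) (hn0 : ℓ n 0 = 1) (hnn : ℓ n n = 2) (h0n : ℓ 0 n = 3) :
    False := by
  have key : ∑ i ∈ Finset.range n, ∑ j ∈ Finset.range n,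
      ((ddeg (ℓ i j) (ℓ (i+1) j) - ddeg (ℓ i (j+1)) (ℓ (i+1) (j+1)))
        + (ddeg (ℓ (i+1) j) (ℓ (i+1) (j+1)) - ddeg (ℓ i j) (ℓ i (j+1)))) = 0 := by
    refine Finset.sum_eq_zero fun i hi => Finset.sum_eq_zero fun j hj => ?_
    exact cell_zero _ _ _ _ (hcell i j (Finset.mem_range.mp hi) (Finset.mem_range.mp hj))
  have expand : ∑ i ∈ Finset.range n, ∑ j ∈ Finset.range n,
      ((ddeg (ℓ i j) (ℓ (i+1) j) - ddeg (ℓ i (j+1)) (ℓ (i+1) (j+1)))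
        + (ddeg (ℓ (i+1) j) (ℓ (i+1) (j+1)) - ddeg (ℓ i j) (ℓ i (j+1))))
      = (∑ i ∈ Finset.range n, ddeg (ℓ i 0) (ℓ (i+1) 0)
          - ∑ i ∈ Finset.range n, ddeg (ℓ i n) (ℓ (i+1) n))
        + (∑ j ∈ Finset.range n, ddeg (ℓ n j) (ℓ n (j+1))
          - ∑ j ∈ Finset.range n, ddeg (ℓ 0 j) (ℓ 0 (j+1))) := by
    have e1 : ∀ i, ∑ j ∈ Finset.range n,
        ((ddeg (ℓ i j) (ℓ (i+1) j) - ddeg (ℓ i (j+1)) (ℓ (i+1) (j+1)))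
          + (ddeg (ℓ (i+1) j) (ℓ (i+1) (j+1)) - ddeg (ℓ i j) (ℓ i (j+1))))
        = (ddeg (ℓ i 0) (ℓ (i+1) 0) - ddeg (ℓ i n) (ℓ (i+1) n))
          + ∑ j ∈ Finset.range n,
              (ddeg (ℓ (i+1) j) (ℓ (i+1) (j+1)) - ddeg (ℓ i j) (ℓ i (j+1))) := by
      intro i
      rw [Finset.sum_add_distrib,
        Finset.sum_range_sub' (fun j => ddeg (ℓ i j) (ℓ (i+1) j)) n]
    rw [Finset.sum_congr rfl fun i _ => e1 i, Finset.sum_add_distrib,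
      Finset.sum_sub_distrib]
    congr 1
    rw [Finset.sum_comm]
    have e2 : ∀ j, ∑ i ∈ Finset.range n,
        (ddeg (ℓ (i+1) j) (ℓ (i+1) (j+1)) - ddeg (ℓ i j) (ℓ i (j+1)))
        = ddeg (ℓ n j) (ℓ n (j+1)) - ddeg (ℓ 0 j) (ℓ 0 (j+1)) :=
      fun j => Finset.sum_range_sub (fun i => ddeg (ℓ i j) (ℓ i (j+1))) n
    rw [Finset.sum_congr rfl fun j _ => e2 j, Finset.sum_sub_distrib]
  have hb : ∑ i ∈ Finset.range n, ddeg (ℓ i 0) (ℓ (i+1) 0) = 1 := by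
    have := side_sum 0 (fun i => ℓ i 0) n hbot
    rw [this, if_neg (by rw [hn0]; decide), if_pos h00]
    norm_num
  have ht : ∑ i ∈ Finset.range n, ddeg (ℓ i n) (ℓ (i+1) n) = -1 := by
    have := side_sum 2 (fun i => ℓ i n) n htop
    rw [this, if_pos hnn, if_neg (by rw [h0n]; decide)]
    norm_num
  have hr : ∑ j ∈ Finset.range n, ddeg (ℓ n j) (ℓ n (j+1)) = 1 := by
    have := side_sum 1 (fun j => ℓ n j) n hrt
    rw [this, if_neg (by rw [hnn]; decide), if_pos hn0]
    norm_num
  have hl : ∑ j ∈ Finset.range n, ddeg (ℓ 0 j) (ℓ 0 (j+1)) = -1 := by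
    have h3 : ∀ j ≤ n, ℓ 0 j = 3 ∨ ℓ 0 j = 3 + 1 := by
      intro j hj
      rcases hlf j hj with h | h
      · exact Or.inl h
      · exact Or.inr (by rw [h]; decide)
    have := side_sum 3 (fun j => ℓ 0 j) n h3
    rw [this, if_pos h0n, if_neg (by rw [h00]; decide)]
    norm_num
  rw [expand, hb, ht, hr, hl] at key
  norm_num at key


set_option maxHeartbeats 1000000 in
/-- No four closed sets can cover the square `[-1,1]²` with each edge covered by the
corresponding pair of sets while both pairs of opposite sets are disjoint. -/
theorem no_replicable_cover
    (Bmm Bmp Bpm Bpp : Set (ℝ × ℝ))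
    (hcmm : IsClosed Bmm) (hcmp : IsClosed Bmp)
    (hcpm : IsClosed Bpm) (hcpp : IsClosed Bpp)
    (hcover : (Set.Icc (-1:ℝ) 1 ×ˢ Set.Icc (-1:ℝ) 1) ⊆ Bmm ∪ Bmp ∪ Bpm ∪ Bpp)
    (hleft : ∀ y ∈ Set.Icc (-1:ℝ) 1, ((-1:ℝ), y) ∈ Bmm ∪ Bmp)
    (hright : ∀ y ∈ Set.Icc (-1:ℝ) 1, ((1:ℝ), y) ∈ Bpm ∪ Bpp)
    (hdown : ∀ x ∈ Set.Icc (-1:ℝ) 1, (x, (-1:ℝ)) ∈ Bmm ∪ Bpm)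
    (hup : ∀ x ∈ Set.Icc (-1:ℝ) 1, (x, (1:ℝ)) ∈ Bmp ∪ Bpp) :
    ¬(Bmm ∩ Bpp = ∅ ∧ Bmp ∩ Bpm = ∅) := by
  classical
  rintro ⟨h02, h13⟩
  have empty02 : ∀ p : ℝ × ℝ, p ∈ Bmm → p ∈ Bpp → False := fun p h h' =>
    Set.eq_empty_iff_forall_notMem.mp h02 p ⟨h, h'⟩
  have empty13 : ∀ p : ℝ × ℝ, p ∈ Bmp → p ∈ Bpm → False := fun p h h' =>
    Set.eq_empty_iff_forall_notMem.mp h13 p ⟨h, h'⟩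
  obtain ⟨sq, hsq⟩ : ∃ sq : Set (ℝ × ℝ), sq = Set.Icc (-1:ℝ) 1 ×ˢ Set.Icc (-1:ℝ) 1 :=
    ⟨_, rfl⟩
  rw [← hsq] at hcover
  have hm1 : (-1:ℝ) ∈ Set.Icc (-1:ℝ) 1 := by norm_num
  have hp1 : (1:ℝ) ∈ Set.Icc (-1:ℝ) 1 := by norm_num
  -- the four corners are forced
  have cmm : ((-1:ℝ), (-1:ℝ)) ∈ Bmm := by
    rcases hleft _ hm1 with h | h
    · exact h
    · rcases hdown _ hm1 with h' | h'
      · exact h'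
      · exact absurd h' (fun h' => empty13 _ h h')
  have cpm : ((1:ℝ), (-1:ℝ)) ∈ Bpm := by
    rcases hright _ hm1 with h | h
    · exact h
    · rcases hdown _ hp1 with h' | h'
      · exact absurd h' (fun h' => empty02 _ h' h)
      · exact h'
  have cpp : ((1:ℝ), (1:ℝ)) ∈ Bpp := by
    rcases hright _ hp1 with h | h
    · rcases hup _ hp1 with h' | h'
      · exact absurd h' (fun h' => empty13 _ h' h)
      · exact h'
    · exact h
  have cmp : ((-1:ℝ), (1:ℝ)) ∈ Bmp := by
    rcases hleft _ hp1 with h | h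
    · rcases hup _ hm1 with h' | h'
      · exact h'
      · exact absurd h' (fun h' => empty02 _ h h')
    · exact h
  -- separation of opposite sets
  have hsqK : IsCompact sq := hsq ▸ isCompact_Icc.prod isCompact_Icc
  have K02 : IsCompact (Bmm ∩ sq) := hsqK.inter_left hcmm
  have K13 : IsCompact (Bmp ∩ sq) := hsqK.inter_left hcmp
  have d02 : Disjoint (Bmm ∩ sq) Bpp := by
    rw [Set.disjoint_left]
    rintro p ⟨hp, -⟩ hq
    exact empty02 p hp hq
  have d13 : Disjoint (Bmp ∩ sq) Bpm := by
    rw [Set.disjoint_left]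
    rintro p ⟨hp, -⟩ hq
    exact empty13 p hp hq
  obtain ⟨δ1, hδ1, hd1⟩ := d02.exists_thickenings K02 hcpp
  obtain ⟨δ2, hδ2, hd2⟩ := d13.exists_thickenings K13 hcpm
  have sep02 : ∀ p q : ℝ × ℝ, p ∈ Bmm → p ∈ sq → q ∈ Bpp → ¬ dist p q < δ1 := by
    intro p q hp hps hq hlt
    exact Set.disjoint_left.mp hd1
      (Metric.mem_thickening_iff.mpr ⟨p, ⟨hp, hps⟩, by rwa [dist_comm]⟩)
      (Metric.self_subset_thickening hδ1 _ hq)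
  have sep13 : ∀ p q : ℝ × ℝ, p ∈ Bmp → p ∈ sq → q ∈ Bpm → ¬ dist p q < δ2 := by
    intro p q hp hps hq hlt
    exact Set.disjoint_left.mp hd2
      (Metric.mem_thickening_iff.mpr ⟨p, ⟨hp, hps⟩, by rwa [dist_comm]⟩)
      (Metric.self_subset_thickening hδ2 _ hq)
  obtain ⟨ε, hεdef⟩ : ∃ ε : ℝ, ε = min δ1 δ2 := ⟨_, rfl⟩
  have hε : 0 < ε := hεdef ▸ lt_min hδ1 hδ2
  have hεle1 : ε ≤ δ1 := hεdef ▸ min_le_left _ _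
  have hεle2 : ε ≤ δ2 := hεdef ▸ min_le_right _ _
  -- choose the mesh
  obtain ⟨n, hngt⟩ := exists_nat_gt (2 / ε)
  have hnpos : 0 < n := by
    have : (0:ℝ) < n := lt_trans (div_pos two_pos hε) hngt
    exact_mod_cast this
  have hnR : (0:ℝ) < n := by exact_mod_cast hnpos
  have hmesh : 2 / (n:ℝ) < ε := by
    rw [div_lt_iff₀ hnR]
    have := (div_lt_iff₀ hε).mp hngt
    nlinarith
  -- grid
  obtain ⟨x, hxdef⟩ : ∃ x : ℕ → ℝ, x = fun i : ℕ => -1 + 2 * (i:ℝ) / n := ⟨_, rfl⟩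
  have hx0 : x 0 = -1 := by simp [hxdef]
  have hxn : x n = 1 := by
    simp only [hxdef]
    field_simp
    norm_num
  have hxmem : ∀ i ≤ n, x i ∈ Set.Icc (-1:ℝ) 1 := by
    intro i hi
    have hiR : (i:ℝ) ≤ n := by exact_mod_cast hi
    constructor
    · simp only [hxdef]
      have : 0 ≤ 2 * (i:ℝ) / n := by positivity
      linarith
    · simp only [hxdef]
      have h2 : 2 * (i:ℝ) / n ≤ 2 := by
        rw [div_le_iff₀ hnR]
        nlinarith
      linarith
  have hstep : ∀ i : ℕ, x (i+1) - x i = 2 / n := by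
    intro i
    simp only [hxdef]
    push_cast
    field_simp
    ring
  have hxd : ∀ i i' : ℕ, (i' = i ∨ i' = i + 1 ∨ i = i' + 1) → dist (x i) (x i') < ε := by
    intro i i' h
    rcases h with rfl | rfl | h
    · simpa using hε
    · rw [Real.dist_eq, show x i - x (i+1) = -(2/(n:ℝ)) by linarith [hstep i], abs_neg,
        abs_of_pos (by positivity)]
      exact hmesh
    · subst h
      rw [Real.dist_eq, show x (i'+1) - x i' = 2/(n:ℝ) from hstep i',
        abs_of_pos (by positivity)]
      exact hmesh
  obtain ⟨P, hPdef⟩ : ∃ P : ℕ → ℕ → ℝ × ℝ, P = fun i j => (x i, x j) := ⟨_, rfl⟩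
  have hPsq : ∀ i j, i ≤ n → j ≤ n → P i j ∈ sq := by
    intro i j hi hj
    rw [hsq, hPdef]
    exact ⟨hxmem i hi, hxmem j hj⟩
  have hPd : ∀ i j i' j' : ℕ, (i' = i ∨ i' = i + 1 ∨ i = i' + 1) →
      (j' = j ∨ j' = j + 1 ∨ j = j' + 1) → dist (P i j) (P i' j') < ε := by
    intro i j i' j' hi hj
    rw [hPdef]
    simp only [Prod.dist_eq]
    exact max_lt (hxd i i' hi) (hxd j j' hj)
  have hP0 : ∀ j, P 0 j = ((-1:ℝ), x j) := fun j => by rw [hPdef]; simp [hx0]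
  have hPn : ∀ j, P n j = ((1:ℝ), x j) := fun j => by rw [hPdef]; simp [hxn]
  have hQ0 : ∀ i, P i 0 = (x i, (-1:ℝ)) := fun i => by rw [hPdef]; simp [hx0]
  have hQn : ∀ i, P i n = (x i, (1:ℝ)) := fun i => by rw [hPdef]; simp [hxn]
  -- sets indexed by ZMod 4
  obtain ⟨B4, hB4def⟩ : ∃ B4 : ZMod 4 → Set (ℝ × ℝ),
      B4 = fun a => if a = 0 then Bmm else if a = 1 then Bpm else if a = 2 then Bpp else Bmp :=
    ⟨_, rfl⟩
  have hB0 : B4 0 = Bmm := by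
    rw [hB4def]
    show (if (0:ZMod 4) = 0 then Bmm else if (0:ZMod 4) = 1 then Bpm else if (0:ZMod 4) = 2 then Bpp else Bmp) = Bmm
    rw [if_pos rfl]
  have hB1 : B4 1 = Bpm := by
    rw [hB4def]
    show (if (1:ZMod 4) = 0 then Bmm else if (1:ZMod 4) = 1 then Bpm else if (1:ZMod 4) = 2 then Bpp else Bmp) = Bpm
    rw [if_neg (show (1:ZMod 4) ≠ 0 by decide), if_pos rfl]
  have hB2 : B4 2 = Bpp := by
    rw [hB4def]
    show (if (2:ZMod 4) = 0 then Bmm else if (2:ZMod 4) = 1 then Bpm else if (2:ZMod 4) = 2 then Bpp else Bmp) = Bpp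
    rw [if_neg (show (2:ZMod 4) ≠ 0 by decide), if_neg (show (2:ZMod 4) ≠ 1 by decide), if_pos rfl]
  have hB3 : B4 3 = Bmp := by
    rw [hB4def]
    show (if (3:ZMod 4) = 0 then Bmm else if (3:ZMod 4) = 1 then Bpm else if (3:ZMod 4) = 2 then Bpp else Bmp) = Bmp
    rw [if_neg (show (3:ZMod 4) ≠ 0 by decide), if_neg (show (3:ZMod 4) ≠ 1 by decide),
      if_neg (show (3:ZMod 4) ≠ 2 by decide)]
  -- corner points
  have hc00 : P 0 0 ∈ Bmm := by rw [hP0 0, hx0]; exact cmm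
  have hcn0 : P n 0 ∈ Bpm := by rw [hPn 0, hx0]; exact cpm
  have hcnn : P n n ∈ Bpp := by rw [hPn n, hxn]; exact cpp
  have hc0n : P 0 n ∈ Bmp := by rw [hP0 n, hxn]; exact cmp
  -- the labelling
  have hlab : ∀ i j, i ≤ n → j ≤ n → ∃ a : ZMod 4,
      P i j ∈ B4 a ∧
      (j = 0 → (a = 0 ∨ a = 1)) ∧ (i = n → (a = 1 ∨ a = 2)) ∧
      (j = n → (a = 2 ∨ a = 3)) ∧ (i = 0 → (a = 3 ∨ a = 0)) ∧
      (i = 0 → j = 0 → a = 0) ∧ (i = n → j = 0 → a = 1) ∧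
      (i = n → j = n → a = 2) ∧ (i = 0 → j = n → a = 3) := by
    intro i j hi hj
    by_cases hi0 : i = 0
    · subst hi0
      by_cases hj0 : j = 0
      · subst hj0
        refine ⟨0, by rw [hB0]; exact hc00, ?_, ?_, ?_, ?_, ?_, ?_, ?_, ?_⟩ <;>
          · intros; first | decide | (exfalso; omega)
      · by_cases hjn : j = n
        · subst hjn
          refine ⟨3, by rw [hB3]; exact hc0n, ?_, ?_, ?_, ?_, ?_, ?_, ?_, ?_⟩ <;>
            · intros; first | decide | (exfalso; omega)
        · by_cases hm : P 0 j ∈ Bmm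
          · refine ⟨0, by rw [hB0]; exact hm, ?_, ?_, ?_, ?_, ?_, ?_, ?_, ?_⟩ <;>
              · intros; first | decide | (exfalso; omega)
          · refine ⟨3, ?_, ?_, ?_, ?_, ?_, ?_, ?_, ?_, ?_⟩
            · rw [hB3]
              rcases hleft _ (hxmem j hj) with h | h
              · exact absurd (show P 0 j ∈ Bmm by rw [hP0 j]; exact h) hm
              · rw [hP0 j]; exact h
            all_goals (intros; first | decide | (exfalso; omega))
    · by_cases hin : i = n
      · by_cases hj0 : j = 0
        · subst hj0
          refine ⟨1, by rw [hin, hB1]; exact hcn0, ?_, ?_, ?_, ?_, ?_, ?_, ?_, ?_⟩ <;>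
            · intros; first | decide | (exfalso; omega)
        · by_cases hjn : j = n
          · subst hjn
            refine ⟨2, by rw [hin, hB2]; exact hcnn, ?_, ?_, ?_, ?_, ?_, ?_, ?_, ?_⟩ <;>
              · intros; first | decide | (exfalso; omega)
          · by_cases hm : P i j ∈ Bpp
            · refine ⟨2, by rw [hB2]; exact hm, ?_, ?_, ?_, ?_, ?_, ?_, ?_, ?_⟩ <;>
                · intros; first | decide | (exfalso; omega)
            · refine ⟨1, ?_, ?_, ?_, ?_, ?_, ?_, ?_, ?_, ?_⟩
              · rw [hB1, hin]
                rcases hright _ (hxmem j hj) with h | h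
                · rw [hPn j]; exact h
                · exact absurd (show P i j ∈ Bpp by rw [hin, hPn j]; exact h) hm
              all_goals (intros; first | decide | (exfalso; omega))
      · by_cases hj0 : j = 0
        · subst hj0
          by_cases hm : P i 0 ∈ Bmm
          · refine ⟨0, by rw [hB0]; exact hm, ?_, ?_, ?_, ?_, ?_, ?_, ?_, ?_⟩ <;>
              · intros; first | decide | (exfalso; omega)
          · refine ⟨1, ?_, ?_, ?_, ?_, ?_, ?_, ?_, ?_, ?_⟩
            · rw [hB1]
              rcases hdown _ (hxmem i hi) with h | h
              · exact absurd (show P i 0 ∈ Bmm by rw [hQ0 i]; exact h) hm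
              · rw [hQ0 i]; exact h
            all_goals (intros; first | decide | (exfalso; omega))
        · by_cases hjn : j = n
          · by_cases hm : P i j ∈ Bpp
            · refine ⟨2, by rw [hB2]; exact hm, ?_, ?_, ?_, ?_, ?_, ?_, ?_, ?_⟩ <;>
                · intros; first | decide | (exfalso; omega)
            · refine ⟨3, ?_, ?_, ?_, ?_, ?_, ?_, ?_, ?_, ?_⟩
              · rw [hB3, hjn]
                rcases hup _ (hxmem i hi) with h | h
                · rw [hQn i]; exact h
                · exact absurd (show P i j ∈ Bpp by rw [hjn, hQn i]; exact h) hm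
              all_goals (intros; first | decide | (exfalso; omega))
          · rcases hcover (hPsq i j hi hj) with ((h | h) | h) | h
            · refine ⟨0, by rw [hB0]; exact h, ?_, ?_, ?_, ?_, ?_, ?_, ?_, ?_⟩ <;>
                · intros; first | decide | (exfalso; omega)
            · refine ⟨3, by rw [hB3]; exact h, ?_, ?_, ?_, ?_, ?_, ?_, ?_, ?_⟩ <;>
                · intros; first | decide | (exfalso; omega)
            · refine ⟨1, by rw [hB1]; exact h, ?_, ?_, ?_, ?_, ?_, ?_, ?_, ?_⟩ <;>
                · intros; first | decide | (exfalso; omega)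
            · refine ⟨2, by rw [hB2]; exact h, ?_, ?_, ?_, ?_, ?_, ?_, ?_, ?_⟩ <;>
                · intros; first | decide | (exfalso; omega)
  choose ℓ0 hP0mem using hlab
  obtain ⟨ℓ, hℓ⟩ : ∃ ℓ : ℕ → ℕ → ZMod 4, ∀ i j (hi : i ≤ n) (hj : j ≤ n),
      ℓ i j = ℓ0 i j hi hj :=
    ⟨fun i j => if h : i ≤ n ∧ j ≤ n then ℓ0 i j h.1 h.2 else 0,
      fun i j hi hj => dif_pos ⟨hi, hj⟩⟩
  have hmem : ∀ i j (hi : i ≤ n) (hj : j ≤ n), P i j ∈ B4 (ℓ i j) := by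
    intro i j hi hj
    rw [hℓ i j hi hj]
    exact (hP0mem i j hi hj).1
  have hbot : ∀ i ≤ n, ℓ i 0 = 0 ∨ ℓ i 0 = 1 := fun i hi => by
    rw [hℓ i 0 hi (Nat.zero_le n)]
    exact (hP0mem i 0 hi (Nat.zero_le n)).2.1 rfl
  have hrt : ∀ j ≤ n, ℓ n j = 1 ∨ ℓ n j = 2 := fun j hj => by
    rw [hℓ n j le_rfl hj]
    exact (hP0mem n j le_rfl hj).2.2.1 rfl
  have htop : ∀ i ≤ n, ℓ i n = 2 ∨ ℓ i n = 3 := fun i hi => by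
    rw [hℓ i n hi le_rfl]
    exact (hP0mem i n hi le_rfl).2.2.2.1 rfl
  have hlf : ∀ j ≤ n, ℓ 0 j = 3 ∨ ℓ 0 j = 0 := fun j hj => by
    rw [hℓ 0 j (Nat.zero_le n) hj]
    exact (hP0mem 0 j (Nat.zero_le n) hj).2.2.2.2.1 rfl
  have c00 : ℓ 0 0 = 0 := by
    rw [hℓ 0 0 (Nat.zero_le n) (Nat.zero_le n)]
    exact (hP0mem 0 0 _ _).2.2.2.2.2.1 rfl rfl
  have cn0 : ℓ n 0 = 1 := by
    rw [hℓ n 0 le_rfl (Nat.zero_le n)]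
    exact (hP0mem n 0 _ _).2.2.2.2.2.2.1 rfl rfl
  have cnn : ℓ n n = 2 := by
    rw [hℓ n n le_rfl le_rfl]
    exact (hP0mem n n _ _).2.2.2.2.2.2.2.1 rfl rfl
  have c0n : ℓ 0 n = 3 := by
    rw [hℓ 0 n (Nat.zero_le n) le_rfl]
    exact (hP0mem 0 n _ _).2.2.2.2.2.2.2.2 rfl rfl
  -- no antipodal labels at nearby grid points
  have hval : ∀ b : ZMod 4, b = 0 ∨ b = 1 ∨ b = 2 ∨ b = 3 := by decide
  have hnear : ∀ i j i' j' : ℕ, i ≤ n → j ≤ n → i' ≤ n → j' ≤ n →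
      (i' = i ∨ i' = i + 1 ∨ i = i' + 1) → (j' = j ∨ j' = j + 1 ∨ j = j' + 1) →
      ℓ i' j' ≠ ℓ i j + 2 := by
    intro i j i' j' hi hj hi' hj' hadjx hadjy heq
    have m1 := hmem i j hi hj
    have m2 := hmem i' j' hi' hj'
    rw [heq] at m2
    have hd := hPd i j i' j' hadjx hadjy
    rcases hval (ℓ i j) with ha | ha | ha | ha <;> rw [ha] at m1 m2
    · rw [hB0] at m1
      rw [show (0:ZMod 4) + 2 = 2 by decide, hB2] at m2
      exact sep02 _ _ m1 (hPsq i j hi hj) m2 (lt_of_lt_of_le hd hεle1)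
    · rw [hB1] at m1
      rw [show (1:ZMod 4) + 2 = 3 by decide, hB3] at m2
      refine sep13 _ _ m2 (hPsq i' j' hi' hj') m1 ?_
      rw [dist_comm]
      exact lt_of_lt_of_le hd hεle2
    · rw [hB2] at m1
      rw [show (2:ZMod 4) + 2 = 0 by decide, hB0] at m2
      refine sep02 _ _ m2 (hPsq i' j' hi' hj') m1 ?_
      rw [dist_comm]
      exact lt_of_lt_of_le hd hεle1
    · rw [hB3] at m1
      rw [show (3:ZMod 4) + 2 = 1 by decide, hB1] at m2
      exact sep13 _ _ m1 (hPsq i j hi hj) m2 (lt_of_lt_of_le hd hεle2)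
  have hcell : ∀ i j, i < n → j < n →
      ℓ (i+1) j ≠ ℓ i j + 2 ∧ ℓ (i+1) (j+1) ≠ ℓ i j + 2 ∧ ℓ i (j+1) ≠ ℓ i j + 2 ∧
      ℓ (i+1) (j+1) ≠ ℓ (i+1) j + 2 ∧ ℓ i (j+1) ≠ ℓ (i+1) j + 2 ∧
      ℓ i (j+1) ≠ ℓ (i+1) (j+1) + 2 := by
    intro i j hi hj
    have hi1 : i + 1 ≤ n := hi
    have hj1 : j + 1 ≤ n := hj
    have hi0 : i ≤ n := le_of_lt hi
    have hj0 : j ≤ n := le_of_lt hj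
    refine ⟨?_, ?_, ?_, ?_, ?_, ?_⟩
    · exact hnear i j (i+1) j hi0 hj0 hi1 hj0 (by omega) (by omega)
    · exact hnear i j (i+1) (j+1) hi0 hj0 hi1 hj1 (by omega) (by omega)
    · exact hnear i j i (j+1) hi0 hj0 hi0 hj1 (by omega) (by omega)
    · exact hnear (i+1) j (i+1) (j+1) hi1 hj0 hi1 hj1 (by omega) (by omega)
    · exact hnear (i+1) j i (j+1) hi1 hj0 hi0 hj1 (by omega) (by omega)
    · exact hnear (i+1) (j+1) i (j+1) hi1 hj1 hi0 hj1 (by omega) (by omega)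
  exact grid_false n ℓ hcell hbot hrt htop hlf c00 cn0 cnn c0n
end

section
/- (Poincaré–Miranda in dimension 2) Let F : [−1,1]² → ℝ² be continuous with F₁(−1, y) ≤ 0 and F₁(1, y) ≥ 0 for all y ∈ [−1,1], and F₂(x, −1) ≤ 0 and F₂(x, 1) ≥ 0 for all x ∈ [−1,1]. Then there exists p ∈ [−1,1]² with F(p) = (0,0). -/
/-!
If `F` had no zero, `F / ‖F‖` would be a map from the (contractible) square to the circle, so it
would have a continuous angle function `θ`. Along each edge of the square the sign conditions keep
`F` in a closed half-plane, and at the corners in a closed quadrant; this forces `θ` to be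
nondecreasing from corner to corner when the boundary is traversed counterclockwise. Going once
around, `θ` must then be constant on the corners, but the corners `(-1, -1)` and `(1, 1)` lie in
opposite quadrants.
-/

open Set Real

theorem Real.cos_lt_cos_of_sin_nonpos {x y : ℝ} (hxy : x < y) (hsin : ∀ t ∈ Icc x y, sin t ≤ 0) :
    cos x < cos y := by
  have hmono : MonotoneOn cos (Icc x y) :=
    monotoneOn_of_deriv_nonneg (convex_Icc x y) continuousOn_cos differentiable_cos.differentiableOn
      fun t ht => by simpa using hsin t (interior_subset ht)
  refine (hmono (left_mem_Icc.2 hxy.le) (right_mem_Icc.2 hxy.le) hxy.le).lt_of_ne fun hxy' => ?_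
  -- equality would make `cos`, hence also `sin`, constant on `[x, x + δ]`, forcing `sin δ = 0`
  set δ := min (y - x) 1
  have hδ : 0 < δ := lt_min (by linarith) one_pos
  have hmem : x + δ ∈ Icc x y := ⟨by linarith, by linarith [min_le_left (y - x) 1]⟩
  have hcos : cos (x + δ) = cos x :=
    le_antisymm (hxy' ▸ hmono hmem (right_mem_Icc.2 hxy.le) hmem.2)
      (hmono (left_mem_Icc.2 hxy.le) hmem hmem.1)
  have hsin' : sin (x + δ) = sin x := by
    have hsq : sin (x + δ) ^ 2 = sin x ^ 2 := by
      rw [sin_sq, sin_sq, hcos]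
    nlinarith [hsin _ hmem, hsin x (left_mem_Icc.2 hxy.le)]
  have : sin δ = 0 := by
    rw [show δ = (x + δ) - x by ring, sin_sub, hcos, hsin']; ring
  exact (sin_pos_of_pos_of_lt_pi hδ (by linarith [min_le_right (y - x) 1, pi_gt_three])).ne' this

theorem IsPreconnected.le_of_sin_nonpos {X : Type*} [TopologicalSpace X] {S : Set X}
    (hS : IsPreconnected S) {θ : X → ℝ} (hθ : ContinuousOn θ S) (hsin : ∀ p ∈ S, sin (θ p) ≤ 0)
    {a b : X} (ha : a ∈ S) (hb : b ∈ S) (hca : cos (θ a) ≤ 0) (hcb : 0 ≤ cos (θ b)) :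
    θ a ≤ θ b := by
  by_contra! hba
  have := cos_lt_cos_of_sin_nonpos hba fun t ht => by
    obtain ⟨p, hp, rfl⟩ := hS.intermediate_value hb ha hθ ht
    exact hsin p hp
  linarith

theorem exists_continuous_polar_angle {X : Type*} [TopologicalSpace X] [SimplyConnectedSpace X]
    [LocallyPathConnectedSpace X] {G : X → ℝ × ℝ} (hG : Continuous G) (hG0 : ∀ x, G x ≠ 0) :
    ∃ θ : X → ℝ, Continuous θ ∧
      ∀ x, ∃ r > 0, (G x).1 = r * cos (θ x) ∧ (G x).2 = r * sin (θ x) := by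
  set g : C(X, ℂ) := ⟨Complex.equivRealProdCLM.symm ∘ G, by fun_prop⟩
  have hg0 : ∀ x, g x ≠ 0 := fun x => by simpa [g] using hG0 x
  obtain ⟨ℓ, ⟨-, hℓ⟩, -⟩ := Complex.isCoveringMapOn_exp.existsUnique_continuousMap_lifts g
    (a₀ := Classical.arbitrary X) (Complex.exp_log (hg0 _)) hg0
  refine ⟨fun x => (ℓ x).im, by fun_prop, fun x => ⟨Real.exp (ℓ x).re, Real.exp_pos _, ?_, ?_⟩⟩
  · simpa [g, Complex.exp_re] using congr_arg Complex.re (congr_fun hℓ x).symm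
  · simpa [g, Complex.exp_im] using congr_arg Complex.im (congr_fun hℓ x).symm

theorem not_continuousOn_square_of_miranda_signs {θ : ℝ × ℝ → ℝ}
    (hleft : ∀ y ∈ Icc (-1 : ℝ) 1, cos (θ (-1, y)) ≤ 0)
    (hright : ∀ y ∈ Icc (-1 : ℝ) 1, 0 ≤ cos (θ (1, y)))
    (hbot : ∀ x ∈ Icc (-1 : ℝ) 1, sin (θ (x, -1)) ≤ 0)
    (htop : ∀ x ∈ Icc (-1 : ℝ) 1, 0 ≤ sin (θ (x, 1))) :
    ¬ ContinuousOn θ (Icc (-1) 1 ×ˢ Icc (-1) 1) := by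
  intro hθ
  have hm : (-1 : ℝ) ∈ Icc (-1) 1 := by norm_num
  have hp : (1 : ℝ) ∈ Icc (-1) 1 := by norm_num
  -- on each edge, `θ` is rotated so that the edge condition reads `sin ≤ 0`
  have bottom : θ (-1, -1) ≤ θ (1, -1) :=
    (isPreconnected_Icc.prod isPreconnected_singleton).le_of_sin_nonpos
      (hθ.mono (prod_mono le_rfl (singleton_subset_iff.2 hm)))
      (by rintro ⟨x, _⟩ ⟨hx, rfl⟩; exact hbot x hx) ⟨hm, rfl⟩ ⟨hp, rfl⟩ (hleft _ hm) (hright _ hm)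
  have right : θ (1, -1) - π / 2 ≤ θ (1, 1) - π / 2 :=
    (isPreconnected_singleton.prod isPreconnected_Icc).le_of_sin_nonpos (θ := fun p => θ p - π / 2)
      ((hθ.mono (prod_mono (singleton_subset_iff.2 hp) le_rfl)).sub continuousOn_const)
      (by rintro ⟨_, y⟩ ⟨rfl, hy⟩; simpa [sin_sub_pi_div_two] using hright y hy)
      ⟨rfl, hm⟩ ⟨rfl, hp⟩ (by simpa [cos_sub_pi_div_two] using hbot _ hp)
      (by simpa [cos_sub_pi_div_two] using htop _ hp)
  have top : θ (1, 1) - π ≤ θ (-1, 1) - π :=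
    (isPreconnected_Icc.prod isPreconnected_singleton).le_of_sin_nonpos (θ := fun p => θ p - π)
      ((hθ.mono (prod_mono le_rfl (singleton_subset_iff.2 hp))).sub continuousOn_const)
      (by rintro ⟨x, _⟩ ⟨hx, rfl⟩; simpa [sin_sub_pi] using htop x hx)
      ⟨hp, rfl⟩ ⟨hm, rfl⟩ (by simpa [cos_sub_pi] using hright _ hp)
      (by simpa [cos_sub_pi] using hleft _ hp)
  have left : θ (-1, 1) + π / 2 ≤ θ (-1, -1) + π / 2 :=
    (isPreconnected_singleton.prod isPreconnected_Icc).le_of_sin_nonpos (θ := fun p => θ p + π / 2)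
      ((hθ.mono (prod_mono (singleton_subset_iff.2 hm) le_rfl)).add continuousOn_const)
      (by rintro ⟨_, y⟩ ⟨rfl, hy⟩; simpa [sin_add_pi_div_two] using hleft y hy)
      ⟨rfl, hp⟩ ⟨rfl, hm⟩ (by simpa [cos_add_pi_div_two] using htop _ hm)
      (by simpa [cos_add_pi_div_two] using hbot _ hm)
  have hcorner : θ (-1, -1) = θ (1, 1) := by linarith
  nlinarith [sin_sq_add_cos_sq (θ (1, 1)), hcorner ▸ hleft _ hm, hcorner ▸ hbot _ hm,
    hright _ hp, htop _ hp]

/-- The Poincaré–Miranda theorem in dimension 2: a continuous map on `[-1,1]²` whose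
first component is nonpositive on the left face and nonnegative on the right face, and
whose second component is nonpositive on the bottom face and nonnegative on the top
face, has a zero in the square. -/
theorem poincare_miranda_dim2
    (F : ℝ × ℝ → ℝ × ℝ)
    (hcont : ContinuousOn F (Set.Icc (-1:ℝ) 1 ×ˢ Set.Icc (-1:ℝ) 1))
    (h1m : ∀ y ∈ Set.Icc (-1:ℝ) 1, (F (-1, y)).1 ≤ 0)
    (h1p : ∀ y ∈ Set.Icc (-1:ℝ) 1, 0 ≤ (F (1, y)).1)
    (h2m : ∀ x ∈ Set.Icc (-1:ℝ) 1, (F (x, -1)).2 ≤ 0)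
    (h2p : ∀ x ∈ Set.Icc (-1:ℝ) 1, 0 ≤ (F (x, 1)).2) :
    ∃ p ∈ Set.Icc (-1:ℝ) 1 ×ˢ Set.Icc (-1:ℝ) 1, F p = (0, 0) := by
  by_contra! hF
  have h : (-1 : ℝ) ≤ 1 := by norm_num
  have hm : (-1 : ℝ) ∈ Icc (-1) 1 := by norm_num
  have hp : (1 : ℝ) ∈ Icc (-1) 1 := by norm_num
  set G : ℝ × ℝ → ℝ × ℝ := fun p => F (projIcc (-1) 1 h p.1, projIcc (-1) 1 h p.2)
  have hGF : ∀ x ∈ Icc (-1 : ℝ) 1, ∀ y ∈ Icc (-1 : ℝ) 1, G (x, y) = F (x, y) := by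
    intro x hx y hy
    simp [G, projIcc_of_mem h hx, projIcc_of_mem h hy]
  have hG : Continuous G :=
    hcont.comp_continuous (by fun_prop) fun p => ⟨Subtype.mem _, Subtype.mem _⟩
  obtain ⟨θ, hθ, hpolar⟩ :=
    exists_continuous_polar_angle hG fun p => hF _ ⟨Subtype.mem _, Subtype.mem _⟩
  refine not_continuousOn_square_of_miranda_signs (θ := θ) (fun y hy => ?_) (fun y hy => ?_)
    (fun x hx => ?_) (fun x hx => ?_) hθ.continuousOn
  · obtain ⟨r, hr, hr1, -⟩ := hpolar (-1, y)
    nlinarith [hGF _ hm _ hy ▸ h1m y hy]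
  · obtain ⟨r, hr, hr1, -⟩ := hpolar (1, y)
    nlinarith [hGF _ hp _ hy ▸ h1p y hy]
  · obtain ⟨r, hr, -, hr2⟩ := hpolar (x, -1)
    nlinarith [hGF _ hx _ hm ▸ h2m x hx]
  · obtain ⟨r, hr, -, hr2⟩ := hpolar (x, 1)
    nlinarith [hGF _ hx _ hp ▸ h2p x hx]
end
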